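/- arXiv:1203.6855 — 4 statements merged into one kernel-verified Lean document; each statement's English description precedes it below -/
import Mathlib

section
/- Let K be a compact Hausdorff space. The set NM(C(K)) of bounded linear operators on C(K) that are not weak multipliers is either empty or spaceable in L(C(K)). -/
/-!
If `T` is not a weak multiplier, there are a bounded disjoint sequence `e n` and points `x n`
with `e n (x n) = 0` and `ε ≤ |T (e n) (x n)|`. It suffices to find a bounded linear map
`Φ : C₀(ℕ, ℝ) → L(C(K))` such that, for every `j`, the operator `Φ t` stays `|t j| * ε` away
from `0` on such test data: then `Φ` is bounded below, and its range is a closed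
infinite-dimensional subspace consisting of non-weak multipliers and `0`.

If no subsequence of `x` converges, the index set splits recursively into infinitely many
infinite blocks whose points are separated by disjoint Urysohn bumps `v j`, equal to `1` on
block `j`, and `Φ t = (∑ j, t j • v j) * T`.

If `x n → p`, then `T (e n) p → 0`, as for any bounded functional on a bounded disjoint
sequence. The normalised `e (2k+1)` are disjoint bumps `u k` with `u k (y k) = 1` at points
where `e (2k)` vanishes, and `Φ t f = ∑ k, t (k.unpair.1) * (T f (x (2k)) - T f p) • u k`;
at `(e (2k), y k)` this recovers `T (e (2k)) (x (2k))` up to the small error at `p`.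
-/

open Filter Topology

/-- A bounded linear operator `T` on `C(K, ℝ)` is a *weak multiplier* if for every bounded
pairwise disjoint sequence `(e_n)` in `C(K, ℝ)` and every sequence `(x_n)` in `K` with
`e_n (x_n) = 0` for all `n`, one has `T (e_n) (x_n) → 0`. -/
def IsWeakMultiplier {K : Type*} [TopologicalSpace K] [CompactSpace K]
    (T : C(K, ℝ) →L[ℝ] C(K, ℝ)) : Prop :=
  ∀ (e : ℕ → C(K, ℝ)) (x : ℕ → K),
    (∃ M : ℝ, ∀ n, ‖e n‖ ≤ M) →
    (∀ i j, i ≠ j → e i * e j = 0) →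
    (∀ n, (e n) (x n) = 0) →
    Filter.Tendsto (fun n => (T (e n)) (x n)) Filter.atTop (nhds 0)

/-- An operator on `C(K, ℝ)` is *weakly compact* if the image of the closed unit ball has
compact closure in the weak topology. -/
def IsWeaklyCompactOp {K : Type*} [TopologicalSpace K] [CompactSpace K]
    (S : C(K, ℝ) →L[ℝ] C(K, ℝ)) : Prop :=
  IsCompact (closure ((toWeakSpace ℝ C(K, ℝ)) '' (S '' Metric.closedBall 0 1)))

/-- An operator on `C(K, ℝ)` is a *weak multiplication* if it has the form `g•I + S` with
`g ∈ C(K, ℝ)` and `S` weakly compact. -/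
def IsWeakMultiplication {K : Type*} [TopologicalSpace K] [CompactSpace K]
    (T : C(K, ℝ) →L[ℝ] C(K, ℝ)) : Prop :=
  ∃ (g : C(K, ℝ)) (S : C(K, ℝ) →L[ℝ] C(K, ℝ)),
    IsWeaklyCompactOp S ∧ T = ContinuousLinearMap.mul ℝ C(K, ℝ) g + S

/-- A subset `A` of a real vector space is *lineable* if `A ∪ {0}` contains an
infinite-dimensional subspace. -/
def Lineable {X : Type*} [AddCommGroup X] [Module ℝ X] (A : Set X) : Prop :=
  ∃ W : Submodule ℝ X, ¬ FiniteDimensional ℝ W ∧ (W : Set X) ⊆ A ∪ {0}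

/-- A subset `A` of a real normed space is *spaceable* if `A ∪ {0}` contains a closed
infinite-dimensional subspace. -/
def Spaceable {X : Type*} [NormedAddCommGroup X] [NormedSpace ℝ X] (A : Set X) : Prop :=
  ∃ W : Submodule ℝ X, IsClosed (W : Set X) ∧ ¬ FiniteDimensional ℝ W ∧ (W : Set X) ⊆ A ∪ {0}

open scoped ZeroAtInfty NNReal

namespace ContinuousMap

variable {K : Type*} [TopologicalSpace K]

lemma apply_eq_zero_or_apply_eq_zero_of_mul_eq_zero {f g : C(K, ℝ)} (h : f * g = 0) (s : K) :
    f s = 0 ∨ g s = 0 :=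
  mul_eq_zero.mp (by simpa using congr($h s))

variable {ι : Type*} {w : ι → C(K, ℝ)}

lemma tsum_smul_apply_of_apply_eq_one (hw : Pairwise fun i j => w i * w j = 0) {c : ι → ℝ}
    (hs : Summable fun i => c i • w i) {j : ι} {s : K} (hjs : w j s = 1) :
    (∑' i, c i • w i) s = c j := by
  rw [← evalCLM_apply ℝ s, (evalCLM ℝ s).map_tsum hs,
    tsum_eq_single j fun i hij => ?_]
  · simp [hjs]
  · have hi : w i s = 0 := by
      simpa [hjs] using apply_eq_zero_or_apply_eq_zero_of_mul_eq_zero (hw hij) s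
    simp [hi]

variable [CompactSpace K]

lemma norm_sum_smul_le_of_pairwise_mul_eq_zero (hw : Pairwise fun i j => w i * w j = 0)
    (c : ι → ℝ) (F : Finset ι) {b : ℝ} (hb : 0 ≤ b) (h : ∀ i ∈ F, |c i| * ‖w i‖ ≤ b) :
    ‖∑ i ∈ F, c i • w i‖ ≤ b := by
  refine (norm_le _ hb).mpr fun s => ?_
  simp only [coe_sum, coe_smul, Finset.sum_apply, Pi.smul_apply,
    smul_eq_mul, Real.norm_eq_abs]
  by_cases hs : ∀ i ∈ F, w i s = 0
  · rwa [Finset.sum_eq_zero fun i hi => by rw [hs i hi, mul_zero], abs_zero]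
  obtain ⟨i, hiF, hi⟩ := not_forall₂.mp hs
  rw [Finset.sum_eq_single_of_mem i hiF fun k _ hki => by
    rw [(apply_eq_zero_or_apply_eq_zero_of_mul_eq_zero (hw hki) s).resolve_right hi, mul_zero]]
  calc |c i * w i s| = |c i| * ‖w i s‖ := abs_mul _ _
    _ ≤ |c i| * ‖w i‖ := by gcongr; exact (w i).norm_coe_le_norm s
    _ ≤ b := h i hiF

lemma norm_tsum_smul_le_of_pairwise_mul_eq_zero (hw : Pairwise fun i j => w i * w j = 0)
    (c : ι → ℝ) {b : ℝ} (hb : 0 ≤ b) (h : ∀ i, |c i| * ‖w i‖ ≤ b) :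
    ‖∑' i, c i • w i‖ ≤ b := by
  by_cases hs : Summable fun i => c i • w i
  · exact le_of_tendsto' ((continuous_norm.tendsto _).comp hs.hasSum)
      fun F => norm_sum_smul_le_of_pairwise_mul_eq_zero hw c F hb fun i _ => h i
  · simpa [tsum_eq_zero_of_not_summable hs] using hb

lemma summable_smul_of_pairwise_mul_eq_zero {w : ℕ → C(K, ℝ)}
    (hw : Pairwise fun i j => w i * w j = 0) (hw1 : ∀ i, ‖w i‖ ≤ 1) {c : ℕ → ℝ}
    (hc : Tendsto c atTop (𝓝 0)) : Summable fun i => c i • w i := by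
  refine summable_iff_vanishing_norm.mpr fun δ hδ => ?_
  obtain ⟨N, hN⟩ := Metric.tendsto_atTop.mp hc (δ / 2) (half_pos hδ)
  refine ⟨Finset.range N, fun F hF => ?_⟩
  refine (norm_sum_smul_le_of_pairwise_mul_eq_zero hw c F (half_pos hδ).le fun i hi => ?_).trans_lt
    (half_lt_self hδ)
  have hiN : N ≤ i := by simpa using Finset.disjoint_left.mp hF hi
  have hci := hN i hiN
  rw [Real.dist_eq, sub_zero] at hci
  nlinarith [abs_nonneg (c i), hw1 i, norm_nonneg (w i)]

lemma exists_apply_ne_zero_norm_inv_smul_le_one {f : C(K, ℝ)} (hf : f ≠ 0) :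
    ∃ y, f y ≠ 0 ∧ ‖(f y)⁻¹ • f‖ ≤ 1 := by
  obtain ⟨s₀, hs₀⟩ : ∃ s, f s ≠ 0 := by simpa [DFunLike.ext_iff] using hf
  have : Nonempty K := ⟨s₀⟩
  obtain ⟨y, -, hy⟩ := isCompact_univ.exists_isMaxOn Set.univ_nonempty
    (f.continuous.abs.continuousOn)
  have hy' : ∀ s, |f s| ≤ |f y| := fun s => hy (Set.mem_univ s)
  have hy0 : f y ≠ 0 := fun h0 => hs₀ (by simpa [h0] using hy' s₀)
  refine ⟨y, hy0, (norm_le _ zero_le_one).mpr fun s => ?_⟩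
  rw [smul_apply, smul_eq_mul, norm_mul, norm_inv, Real.norm_eq_abs,
    Real.norm_eq_abs, inv_mul_le_one₀ (abs_pos.mpr hy0)]
  exact hy' s

lemma tendsto_apply_of_pairwise_mul_eq_zero (φ : C(K, ℝ) →L[ℝ] ℝ) {e : ℕ → C(K, ℝ)}
    (he : Pairwise fun i j => e i * e j = 0) {M : ℝ} (hM : ∀ n, ‖e n‖ ≤ M) :
    Tendsto (fun n => φ (e n)) atTop (𝓝 0) := by
  have hM0 : 0 ≤ M := (norm_nonneg _).trans (hM 0)
  -- signs make `∑ |φ (e n)|` the value of `φ` at a function of norm `≤ M`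
  have hsum : Summable fun n => |φ (e n)| := by
    refine summable_of_sum_le (fun n => abs_nonneg _) (c := ‖φ‖ * M) fun F => ?_
    calc ∑ n ∈ F, |φ (e n)| = φ (∑ n ∈ F, (SignType.sign (φ (e n)) : ℝ) • e n) := by
          simp [map_sum, sign_mul_self]
      _ ≤ ‖φ‖ * ‖∑ n ∈ F, (SignType.sign (φ (e n)) : ℝ) • e n‖ :=
          (le_abs_self _).trans (φ.le_opNorm _)
      _ ≤ ‖φ‖ * M := by
          gcongr
          refine norm_sum_smul_le_of_pairwise_mul_eq_zero he _ F hM0 fun n _ => ?_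
          calc |(SignType.sign (φ (e n)) : ℝ)| * ‖e n‖ ≤ 1 * M := by
                gcongr
                · cases SignType.sign (φ (e n)) <;> simp
                · exact hM n
            _ = M := one_mul M
  exact squeeze_zero_norm (fun n => le_of_eq (Real.norm_eq_abs _)) hsum.tendsto_atTop_zero

end ContinuousMap

namespace ZeroAtInftyContinuousMap

variable {α β : Type*} [TopologicalSpace α] [SeminormedAddCommGroup β]

lemma norm_apply_le (f : C₀(α, β)) (x : α) : ‖f x‖ ≤ ‖f‖ := by
  simpa [norm_toBCF_eq_norm] using f.toBCF.norm_coe_le_norm x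

lemma norm_le_of_forall_norm_apply_le {f : C₀(α, β)} {b : ℝ} (hb : 0 ≤ b)
    (h : ∀ x, ‖f x‖ ≤ b) : ‖f‖ ≤ b := by
  rw [← norm_toBCF_eq_norm]
  exact (BoundedContinuousFunction.norm_le hb).mpr h

lemma tendsto_atTop (f : C₀(ℕ, β)) : Tendsto f atTop (𝓝 0) := by
  simpa only [cocompact_eq_cofinite, Nat.cofinite_eq_atTop] using zero_at_infty f

def ofTendsto (c : ℕ → β) (hc : Tendsto c atTop (𝓝 0)) : C₀(ℕ, β) where
  toFun := c
  continuous_toFun := continuous_of_discreteTopology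
  zero_at_infty' := by rwa [cocompact_eq_cofinite, Nat.cofinite_eq_atTop]

@[simp]
lemma ofTendsto_apply (c : ℕ → β) (hc : Tendsto c atTop (𝓝 0)) (n : ℕ) :
    ofTendsto c hc n = c n :=
  rfl

lemma not_finiteDimensional_nat : ¬ FiniteDimensional ℝ C₀(ℕ, ℝ) := by
  intro _
  let δ : ℕ → C₀(ℕ, ℝ) := fun j =>
    ofTendsto (Pi.single j 1) (tendsto_const_nhds.congr' <| (eventually_gt_atTop j).mono
      fun n hn => (Pi.single_eq_of_ne (M := fun _ => ℝ) hn.ne' 1).symm)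
  let coeFn : C₀(ℕ, ℝ) →ₗ[ℝ] ℕ → ℝ :=
    { toFun := fun f => f, map_add' := fun _ _ => rfl, map_smul' := fun _ _ => rfl }
  have hδ : LinearIndependent ℝ δ := (Pi.linearIndependent_single_one ℕ ℝ).of_comp coeFn
  have := hδ.finite
  exact not_finite ℕ

end ZeroAtInftyContinuousMap

lemma spaceable_of_antilipschitz {X Y : Type*} [NormedAddCommGroup X] [NormedSpace ℝ X]
    [CompleteSpace X] [NormedAddCommGroup Y] [NormedSpace ℝ Y] (hX : ¬ FiniteDimensional ℝ X)
    {A : Set Y} (Φ : X →L[ℝ] Y) {C : ℝ≥0} (hΦ : AntilipschitzWith C Φ)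
    (hA : ∀ v, v ≠ 0 → Φ v ∈ A) : Spaceable A := by
  refine ⟨LinearMap.range (Φ : X →ₗ[ℝ] Y), ?_, fun _ => hX ?_, ?_⟩
  · simpa only [LinearMap.coe_range, ContinuousLinearMap.coe_coe]
      using hΦ.isClosed_range Φ.uniformContinuous
  · exact Module.Finite.equiv (LinearEquiv.ofInjective (Φ : X →ₗ[ℝ] Y) hΦ.injective).symm
  · rintro _ ⟨v, rfl⟩
    by_cases hv : v = 0
    · simp [hv]
    · exact Or.inl (hA v hv)

section Counterexample

variable {K : Type*} [TopologicalSpace K] [CompactSpace K]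

structure IsWeakMultiplierCounterexample (T : C(K, ℝ) →L[ℝ] C(K, ℝ)) (M ε : ℝ)
    (e : ℕ → C(K, ℝ)) (x : ℕ → K) : Prop where
  norm_le : ∀ n, ‖e n‖ ≤ M
  pairwise_mul_eq_zero : Pairwise fun i j => e i * e j = 0
  apply_eq_zero : ∀ n, e n (x n) = 0
  le_abs_apply : ∀ n, ε ≤ |T (e n) (x n)|

namespace IsWeakMultiplierCounterexample

variable {T : C(K, ℝ) →L[ℝ] C(K, ℝ)} {M ε : ℝ} {e : ℕ → C(K, ℝ)} {x : ℕ → K}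

lemma comp (h : IsWeakMultiplierCounterexample T M ε e x) {φ : ℕ → ℕ}
    (hφ : Function.Injective φ) : IsWeakMultiplierCounterexample T M ε (e ∘ φ) (x ∘ φ) where
  norm_le n := h.norm_le (φ n)
  pairwise_mul_eq_zero _ _ hij := h.pairwise_mul_eq_zero (hφ.ne hij)
  apply_eq_zero n := h.apply_eq_zero (φ n)
  le_abs_apply n := h.le_abs_apply (φ n)

lemma not_isWeakMultiplier (h : IsWeakMultiplierCounterexample T M ε e x) (hε : 0 < ε) :
    ¬ IsWeakMultiplier T := fun hT => by
  have hlim := hT e x ⟨M, h.norm_le⟩ (fun _ _ hij => h.pairwise_mul_eq_zero hij) h.apply_eq_zero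
  obtain ⟨n, hn⟩ := (hlim.eventually (Metric.ball_mem_nhds 0 hε)).exists
  exact (h.le_abs_apply n).not_gt (by simpa [Real.dist_eq] using hn)

lemma le_mul_opNorm (h : IsWeakMultiplierCounterexample T M ε e x) : ε ≤ M * ‖T‖ :=
  calc ε ≤ |T (e 0) (x 0)| := h.le_abs_apply 0
    _ ≤ ‖T (e 0)‖ := (T (e 0)).norm_coe_le_norm (x 0)
    _ ≤ ‖T‖ * ‖e 0‖ := T.le_opNorm (e 0)
    _ ≤ M * ‖T‖ := by rw [mul_comm]; gcongr; exact h.norm_le 0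

end IsWeakMultiplierCounterexample

lemma exists_isWeakMultiplierCounterexample {T : C(K, ℝ) →L[ℝ] C(K, ℝ)}
    (hT : ¬ IsWeakMultiplier T) :
    ∃ M ε, 0 < ε ∧ ∃ e x, IsWeakMultiplierCounterexample T M ε e x := by
  simp only [IsWeakMultiplier, not_forall] at hT
  obtain ⟨e, x, ⟨M, hM⟩, he, hx, hlim⟩ := hT
  obtain ⟨s, hs, hfreq⟩ := not_tendsto_iff_exists_frequently_notMem.mp hlim
  obtain ⟨ε, hε, hball⟩ := Metric.mem_nhds_iff.mp hs
  have hfreq' : ∃ᶠ n in atTop, ε ≤ |T (e n) (x n)| := hfreq.mono fun n hn => by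
    simpa [Real.dist_eq] using mt (@hball _) hn
  obtain ⟨φ, hφ, hφε⟩ := extraction_of_frequently_atTop hfreq'
  exact ⟨M, ε, hε, e ∘ φ, x ∘ φ, fun n => hM (φ n),
    fun _ _ hij => he _ _ (hφ.injective.ne hij), fun n => hx (φ n), hφε⟩

end Counterexample

section Spaceable

variable {K : Type*} [TopologicalSpace K] [CompactSpace K]

lemma spaceable_of_forall_isWeakMultiplierCounterexample
    (Φ : C₀(ℕ, ℝ) →L[ℝ] (C(K, ℝ) →L[ℝ] C(K, ℝ))) {M ε : ℝ} (hε : 0 < ε)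
    {e : ℕ → ℕ → C(K, ℝ)} {x : ℕ → ℕ → K}
    (h : ∀ t j, IsWeakMultiplierCounterexample (Φ t) M (|t j| * ε) (e j) (x j)) :
    Spaceable {T : C(K, ℝ) →L[ℝ] C(K, ℝ) | ¬ IsWeakMultiplier T} := by
  have hM : 0 ≤ M := (norm_nonneg _).trans ((h 0 0).norm_le 0)
  have hbound : ∀ t, ‖t‖ ≤ (M / ε) * ‖Φ t‖ := fun t =>
    ZeroAtInftyContinuousMap.norm_le_of_forall_norm_apply_le (by positivity) fun j => by
      rw [div_mul_eq_mul_div, le_div_iff₀ hε, Real.norm_eq_abs]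
      linarith [(h t j).le_mul_opNorm]
  have hΦ : AntilipschitzWith ⟨M / ε, by positivity⟩ Φ :=
    AddMonoidHomClass.antilipschitz_of_bound Φ hbound
  refine spaceable_of_antilipschitz ZeroAtInftyContinuousMap.not_finiteDimensional_nat Φ hΦ
    fun t ht => ?_
  obtain ⟨j, hj⟩ : ∃ j, t j ≠ 0 := by simpa [DFunLike.ext_iff] using ht
  exact (h t j).not_isWeakMultiplier (by positivity)

end Spaceable

section DisjointSum

variable {K : Type*} [TopologicalSpace K] [CompactSpace K] {u : ℕ → C(K, ℝ)}

lemma summable_smul_of_zeroAtInfty (hu : Pairwise fun i j => u i * u j = 0)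
    (hu1 : ∀ k, ‖u k‖ ≤ 1) (t : C₀(ℕ, ℝ)) : Summable fun k => t k • u k :=
  ContinuousMap.summable_smul_of_pairwise_mul_eq_zero hu hu1 t.tendsto_atTop

noncomputable def disjointSumCLM (hu : Pairwise fun i j => u i * u j = 0) (hu1 : ∀ k, ‖u k‖ ≤ 1) :
    C₀(ℕ, ℝ) →L[ℝ] C(K, ℝ) :=
  LinearMap.mkContinuous
    { toFun := fun t => ∑' k, t k • u k
      map_add' := fun s t => by
        simp only [ZeroAtInftyContinuousMap.coe_add, Pi.add_apply, add_smul]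
        exact (summable_smul_of_zeroAtInfty hu hu1 s).tsum_add
          (summable_smul_of_zeroAtInfty hu hu1 t)
      map_smul' := fun c t => by
        simp only [ZeroAtInftyContinuousMap.coe_smul, Pi.smul_apply, smul_eq_mul, ← smul_smul,
          RingHom.id_apply]
        exact (summable_smul_of_zeroAtInfty hu hu1 t).tsum_const_smul c }
    1 fun t => by
      rw [one_mul]
      refine ContinuousMap.norm_tsum_smul_le_of_pairwise_mul_eq_zero hu _ (norm_nonneg t)
        fun k => ?_
      simpa [Real.norm_eq_abs] using
        mul_le_mul (t.norm_apply_le k) (hu1 k) (norm_nonneg _) (norm_nonneg t)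

lemma disjointSumCLM_apply_apply_of_apply_eq_one (hu : Pairwise fun i j => u i * u j = 0)
    (hu1 : ∀ k, ‖u k‖ ≤ 1) (t : C₀(ℕ, ℝ)) {j : ℕ} {s : K} (hjs : u j s = 1) :
    disjointSumCLM hu hu1 t s = t j :=
  ContinuousMap.tsum_smul_apply_of_apply_eq_one hu (summable_smul_of_zeroAtInfty hu hu1 t) hjs

end DisjointSum

section Split

variable {K : Type*} [TopologicalSpace K] [CompactSpace K] [T2Space K]

lemma exists_disjoint_closure_frequently {ι : Type*} {l : Filter ι} [l.NeBot] {x : ι → K}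
    (hx : ∀ p, ¬ Tendsto x l (𝓝 p)) :
    ∃ U V : Set K, Disjoint (closure U) (closure V) ∧ (∃ᶠ i in l, x i ∈ U) ∧
      ∃ᶠ i in l, x i ∈ V := by
  obtain ⟨p, hp⟩ := exists_clusterPt_of_compactSpace (map x l)
  obtain ⟨q, hq, hqp⟩ : ∃ q, MapClusterPt q l x ∧ q ≠ p := by
    by_contra! h
    exact hx p (tendsto_nhds_of_unique_mapClusterPt h)
  obtain ⟨U, hU, V, hV, hUV⟩ := exists_nhds_disjoint_closure hqp.symm
  exact ⟨U, V, hUV, mapClusterPt_iff_frequently.mp hp U hU, mapClusterPt_iff_frequently.mp hq V hV⟩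

lemma exists_disjoint_closure_infinite {x : ℕ → K}
    (hx : ∀ p (φ : ℕ → ℕ), StrictMono φ → ¬ Tendsto (x ∘ φ) atTop (𝓝 p))
    {S : Set ℕ} (hS : S.Infinite) :
    ∃ U V : Set K, Disjoint (closure U) (closure V) ∧ {n ∈ S | x n ∈ U}.Infinite ∧
      {n ∈ S | x n ∈ V}.Infinite := by
  have hSfreq : ∃ᶠ n in atTop, n ∈ S := Nat.frequently_atTop_iff_infinite.mpr hS
  have : (atTop ⊓ 𝓟 S).NeBot := frequently_iff_neBot.mp hSfreq
  have hxS : ∀ p, ¬ Tendsto x (atTop ⊓ 𝓟 S) (𝓝 p) := fun p hp => by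
    obtain ⟨φ, hφ, hφS⟩ := extraction_of_frequently_atTop hSfreq
    exact hx p φ hφ <| hp.comp <|
      tendsto_inf.mpr ⟨hφ.tendsto_atTop, tendsto_principal.mpr (Eventually.of_forall hφS)⟩
  obtain ⟨U, V, hUV, hU, hV⟩ := exists_disjoint_closure_frequently hxS
  rw [frequently_inf_principal, Nat.frequently_atTop_iff_infinite] at hU hV
  exact ⟨U, V, hUV, hU, hV⟩

lemma exists_blocks {x : ℕ → K}
    (hx : ∀ p (φ : ℕ → ℕ), StrictMono φ → ¬ Tendsto (x ∘ φ) atTop (𝓝 p)) :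
    ∃ (B : ℕ → Set ℕ) (U V : ℕ → Set K), (∀ j, (B j).Infinite) ∧
      (∀ j, Disjoint (closure (U j)) (closure (V j))) ∧
      ∀ j, ∀ n ∈ B j, x n ∈ U j ∧ ∀ i < j, x n ∈ V i := by
  choose U V hUV hU hV using fun S : {S : Set ℕ // S.Infinite} =>
    exists_disjoint_closure_infinite hx S.2
  let F : ℕ → {S : Set ℕ // S.Infinite} := fun j =>
    j.rec ⟨Set.univ, Set.infinite_univ⟩ fun _ S => ⟨_, hV S⟩
  have hF : ∀ j, ∀ n ∈ (F j).1, ∀ i < j, x n ∈ V (F i) := by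
    intro j
    induction j with
    | zero => intro n _ i hi; omega
    | succ j ih =>
      rintro n ⟨hn, hnV⟩ i hi
      rcases Nat.lt_succ_iff_lt_or_eq.mp hi with hi | rfl
      exacts [ih n hn i hi, hnV]
  exact ⟨fun j => {n ∈ (F j).1 | x n ∈ U (F j)}, fun j => U (F j), fun j => V (F j),
    fun j => hU (F j), fun j => hUV (F j), fun j n hn => ⟨hn.2, hF j n hn.1⟩⟩

end Split

section Disjointify

variable {K : Type*} [TopologicalSpace K] [CompactSpace K]

/-- `v j = (2 a j - 1)⁺ * ∏_{i < j} (1 - 2 a i)⁺`: `v j` lives where `a j > 1/2` and every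
earlier `a i < 1/2`. -/
lemma ContinuousMap.exists_pairwise_mul_eq_zero_of_mem_Icc (a : ℕ → C(K, ℝ))
    (ha : ∀ j s, a j s ∈ Set.Icc (0 : ℝ) 1) :
    ∃ v : ℕ → C(K, ℝ), (Pairwise fun i j => v i * v j = 0) ∧ (∀ j, ‖v j‖ ≤ 1) ∧
      ∀ j s, a j s = 1 → (∀ i < j, a i s = 0) → v j s = 1 := by
  let v : ℕ → C(K, ℝ) := fun j =>
    ⟨fun s => max (2 * a j s - 1) 0 * ∏ i ∈ Finset.range j, max (1 - 2 * a i s) 0, by fun_prop⟩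
  have hv : ∀ j s, v j s = max (2 * a j s - 1) 0 * ∏ i ∈ Finset.range j, max (1 - 2 * a i s) 0 :=
    fun _ _ => rfl
  have hvanish : ∀ i j, i < j → ∀ s, v i s = 0 ∨ v j s = 0 := fun i j hij s => by
    rcases le_or_gt (a i s) (1 / 2) with hai | hai
    · exact Or.inl (by rw [hv, max_eq_right (by linarith), zero_mul])
    · exact Or.inr (by
        rw [hv, Finset.prod_eq_zero (Finset.mem_range.mpr hij) (max_eq_right (by linarith)),
          mul_zero])
  refine ⟨v, fun i j hij => ?_, fun j => ?_, fun j s hj hi => ?_⟩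
  · ext s
    rw [ContinuousMap.mul_apply, ContinuousMap.zero_apply, mul_eq_zero]
    rcases hij.lt_or_gt with h | h
    exacts [hvanish i j h s, (hvanish j i h s).symm]
  · refine (ContinuousMap.norm_le _ zero_le_one).mpr fun s => ?_
    have hfac : ∀ i, max (1 - 2 * a i s) 0 ∈ Set.Icc (0 : ℝ) 1 := fun i =>
      ⟨le_max_right _ _, max_le (by linarith [(ha i s).1]) zero_le_one⟩
    rw [Real.norm_eq_abs, hv, abs_le]
    constructor <;> nlinarith [le_max_right (2 * a j s - 1) 0,
      max_le (by linarith [(ha j s).2] : 2 * a j s - 1 ≤ 1) zero_le_one,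
      Finset.prod_nonneg fun i (_ : i ∈ Finset.range j) => (hfac i).1,
      Finset.prod_le_one (fun i (_ : i ∈ Finset.range j) => (hfac i).1) fun i _ => (hfac i).2]
  · rw [hv, hj, Finset.prod_eq_one fun i hij => by rw [hi i (Finset.mem_range.mp hij)]; norm_num]
    norm_num

lemma exists_pairwise_mul_eq_zero_of_disjoint_closure [T2Space K] {U V : ℕ → Set K}
    (hUV : ∀ j, Disjoint (closure (U j)) (closure (V j))) :
    ∃ v : ℕ → C(K, ℝ), (Pairwise fun i j => v i * v j = 0) ∧ (∀ j, ‖v j‖ ≤ 1) ∧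
      ∀ j s, s ∈ U j → (∀ i < j, s ∈ V i) → v j s = 1 := by
  choose a ha0 ha1 ha using fun j => exists_continuous_zero_one_of_isClosed isClosed_closure
    isClosed_closure (hUV j).symm
  obtain ⟨v, hv, hv1, hva⟩ := ContinuousMap.exists_pairwise_mul_eq_zero_of_mem_Icc a ha
  exact ⟨v, hv, hv1, fun j s hU hV => hva j s (ha1 j (subset_closure hU))
    fun i hi => ha0 i (subset_closure (hV i hi))⟩

end Disjointify

namespace IsWeakMultiplierCounterexample

variable {K : Type*} [TopologicalSpace K] [CompactSpace K] {T : C(K, ℝ) →L[ℝ] C(K, ℝ)}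
  {M ε : ℝ} {e : ℕ → C(K, ℝ)} {x : ℕ → K}

lemma spaceable_of_forall_not_tendsto_comp [T2Space K]
    (h : IsWeakMultiplierCounterexample T M ε e x) (hε : 0 < ε)
    (hx : ∀ p (φ : ℕ → ℕ), StrictMono φ → ¬ Tendsto (x ∘ φ) atTop (𝓝 p)) :
    Spaceable {T : C(K, ℝ) →L[ℝ] C(K, ℝ) | ¬ IsWeakMultiplier T} := by
  obtain ⟨B, U, V, hB, hUV, hBUV⟩ := exists_blocks hx
  obtain ⟨v, hv, hv1, hvU⟩ := exists_pairwise_mul_eq_zero_of_disjoint_closure hUV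
  choose ν hν hνB using fun j =>
    extraction_of_frequently_atTop (Nat.frequently_atTop_iff_infinite.mpr (hB j))
  let Φ : C₀(ℕ, ℝ) →L[ℝ] (C(K, ℝ) →L[ℝ] C(K, ℝ)) :=
    (ContinuousLinearMap.compL ℝ C(K, ℝ) C(K, ℝ) C(K, ℝ)).flip T ∘L
      ContinuousLinearMap.mul ℝ C(K, ℝ) ∘L disjointSumCLM hv hv1
  refine spaceable_of_forall_isWeakMultiplierCounterexample Φ (M := M) hε
    (e := fun j => e ∘ ν j) (x := fun j => x ∘ ν j) fun t j => ?_
  have hΦ : ∀ i, Φ t (e (ν j i)) (x (ν j i)) = t j * T (e (ν j i)) (x (ν j i)) := fun i => by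
    have hxU := hBUV j _ (hνB j i)
    simp [Φ, disjointSumCLM_apply_apply_of_apply_eq_one hv hv1 t (hvU j _ hxU.1 hxU.2)]
  have h' := h.comp (hν j).injective
  exact ⟨h'.norm_le, h'.pairwise_mul_eq_zero, h'.apply_eq_zero, fun i => by
    rw [Function.comp_apply, Function.comp_apply, hΦ, abs_mul]
    gcongr
    exact h'.le_abs_apply i⟩

end IsWeakMultiplierCounterexample

section WeightedIncrements

variable {K : Type*} [TopologicalSpace K] [CompactSpace K]

noncomputable def weightedIncrementsCLM (idx : ℕ → ℕ) {z : ℕ → K} {p : K}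
    (hz : Tendsto z atTop (𝓝 p)) : C₀(ℕ, ℝ) →L[ℝ] C(K, ℝ) →L[ℝ] C₀(ℕ, ℝ) :=
  LinearMap.mkContinuous₂
    (LinearMap.mk₂ ℝ (fun t g => ZeroAtInftyContinuousMap.ofTendsto
        (fun k => t (idx k) * (g (z k) - g p)) <| by
          have hg : Tendsto (fun k => g (z k) - g p) atTop (𝓝 0) := by
            simpa using ((g.continuous.tendsto p).comp hz).sub_const (g p)
          refine squeeze_zero_norm (a := fun k => ‖t‖ * ‖g (z k) - g p‖) (fun k => ?_)
            (by simpa using hg.norm.const_mul ‖t‖)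
          rw [norm_mul]
          gcongr
          exact t.norm_apply_le _)
      (fun _ _ _ => by ext; simp [add_mul])
      (fun _ _ _ => by ext; simp [mul_assoc])
      (fun _ _ _ => by ext; simp; ring)
      (fun _ _ _ => by ext; simp; ring))
    2 fun t g => by
      refine ZeroAtInftyContinuousMap.norm_le_of_forall_norm_apply_le (by positivity) fun k => ?_
      simp only [LinearMap.mk₂_apply, ZeroAtInftyContinuousMap.ofTendsto_apply, norm_mul]
      have hinc : ‖g (z k) - g p‖ ≤ 2 * ‖g‖ := by
        linarith [norm_sub_le (g (z k)) (g p), g.norm_coe_le_norm (z k), g.norm_coe_le_norm p]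
      calc ‖t (idx k)‖ * ‖g (z k) - g p‖ ≤ ‖t‖ * (2 * ‖g‖) := by
            gcongr
            exact t.norm_apply_le _
        _ = 2 * ‖t‖ * ‖g‖ := by ring

@[simp]
lemma weightedIncrementsCLM_apply_apply (idx : ℕ → ℕ) {z : ℕ → K} {p : K}
    (hz : Tendsto z atTop (𝓝 p)) (t : C₀(ℕ, ℝ)) (g : C(K, ℝ)) (k : ℕ) :
    weightedIncrementsCLM idx hz t g k = t (idx k) * (g (z k) - g p) :=
  rfl

end WeightedIncrements

namespace IsWeakMultiplierCounterexample

variable {K : Type*} [TopologicalSpace K] [CompactSpace K] {T : C(K, ℝ) →L[ℝ] C(K, ℝ)}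
  {M ε : ℝ} {e : ℕ → C(K, ℝ)} {x : ℕ → K}

lemma ne_zero (h : IsWeakMultiplierCounterexample T M ε e x) (hε : 0 < ε) (n : ℕ) : e n ≠ 0 :=
  fun h0 => (h.le_abs_apply n).not_gt (by simpa [h0] using hε)

lemma spaceable_of_tendsto_of_abs_apply_le (h : IsWeakMultiplierCounterexample T M ε e x)
    (hε : 0 < ε) {p : K} (hx : Tendsto x atTop (𝓝 p)) (hp : ∀ n, |T (e n) p| ≤ ε / 2) :
    Spaceable {T : C(K, ℝ) →L[ℝ] C(K, ℝ) | ¬ IsWeakMultiplier T} := by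
  choose y hy0 hy1 using fun k =>
    ContinuousMap.exists_apply_ne_zero_norm_inv_smul_le_one (h.ne_zero hε (2 * k + 1))
  set u : ℕ → C(K, ℝ) := fun k => (e (2 * k + 1) (y k))⁻¹ • e (2 * k + 1)
  have hu : Pairwise fun i j => u i * u j = 0 := fun i j hij => by
    simp [u, h.pairwise_mul_eq_zero (show 2 * i + 1 ≠ 2 * j + 1 by omega)]
  have huy : ∀ k, u k (y k) = 1 := fun k => by simp [u, hy0 k]
  have hey : ∀ k, e (2 * k) (y k) = 0 := fun k =>
    (ContinuousMap.apply_eq_zero_or_apply_eq_zero_of_mul_eq_zero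
      (h.pairwise_mul_eq_zero (show 2 * k ≠ 2 * k + 1 by omega)) (y k)).resolve_right (hy0 k)
  have hx2 : Tendsto (fun k => x (2 * k)) atTop (𝓝 p) :=
    hx.comp (tendsto_id.const_mul_atTop' two_pos)
  let Φ : C₀(ℕ, ℝ) →L[ℝ] (C(K, ℝ) →L[ℝ] C(K, ℝ)) :=
    (ContinuousLinearMap.compL ℝ C(K, ℝ) C(K, ℝ) C(K, ℝ)).flip T ∘L
      ContinuousLinearMap.compL ℝ C(K, ℝ) C₀(ℕ, ℝ) C(K, ℝ) (disjointSumCLM hu hy1) ∘L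
        weightedIncrementsCLM (fun k => k.unpair.1) hx2
  have hΦ : ∀ t k, Φ t (e (2 * k)) (y k) =
      t k.unpair.1 * (T (e (2 * k)) (x (2 * k)) - T (e (2 * k)) p) := fun t k => by
    simp [Φ, disjointSumCLM_apply_apply_of_apply_eq_one hu hy1 _ (huy k)]
  refine spaceable_of_forall_isWeakMultiplierCounterexample Φ (M := M) (half_pos hε)
    (e := fun j i => e (2 * Nat.pair j i)) (x := fun j i => y (Nat.pair j i)) fun t j =>
    ⟨fun i => h.norm_le _, fun i i' hii' => h.pairwise_mul_eq_zero ?_, fun i => hey _,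
      fun i => ?_⟩
  · simpa using hii'
  · have hlow := h.le_abs_apply (2 * Nat.pair j i)
    have hT := abs_sub_abs_le_abs_sub (T (e (2 * Nat.pair j i)) (x (2 * Nat.pair j i)))
      (T (e (2 * Nat.pair j i)) p)
    rw [hΦ, Nat.unpair_pair, abs_mul]
    gcongr
    linarith [hp (2 * Nat.pair j i)]

lemma spaceable_of_tendsto (h : IsWeakMultiplierCounterexample T M ε e x) (hε : 0 < ε) {p : K}
    (hx : Tendsto x atTop (𝓝 p)) :
    Spaceable {T : C(K, ℝ) →L[ℝ] C(K, ℝ) | ¬ IsWeakMultiplier T} := by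
  have hp := ContinuousMap.tendsto_apply_of_pairwise_mul_eq_zero
    ((ContinuousMap.evalCLM ℝ p).comp T) h.pairwise_mul_eq_zero h.norm_le
  obtain ⟨N, hN⟩ := Metric.tendsto_atTop.mp hp (ε / 2) (half_pos hε)
  exact (h.comp (add_left_injective N)).spaceable_of_tendsto_of_abs_apply_le hε
    ((tendsto_add_atTop_iff_nat N).mpr hx) fun n => by
      simpa [Real.dist_eq] using (hN (n + N) (Nat.le_add_left N n)).le

end IsWeakMultiplierCounterexample

/-- The set of operators on `C(K, ℝ)` that are not weak multipliers is either empty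
or spaceable. -/
theorem nonWeakMultipliers_empty_or_spaceable
    {K : Type*} [TopologicalSpace K] [CompactSpace K] [T2Space K] :
    {T : C(K, ℝ) →L[ℝ] C(K, ℝ) | ¬ IsWeakMultiplier T} = ∅ ∨
      Spaceable {T : C(K, ℝ) →L[ℝ] C(K, ℝ) | ¬ IsWeakMultiplier T} := by
  rcases Set.eq_empty_or_nonempty {T : C(K, ℝ) →L[ℝ] C(K, ℝ) | ¬ IsWeakMultiplier T} with
    hempty | ⟨T, hT⟩
  · exact Or.inl hempty
  right
  obtain ⟨M, ε, hε, e, x, h⟩ := exists_isWeakMultiplierCounterexample hT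
  by_cases hx : ∃ (p : K) (φ : ℕ → ℕ), StrictMono φ ∧ Tendsto (x ∘ φ) atTop (𝓝 p)
  · obtain ⟨p, φ, hφ, hxφ⟩ := hx
    exact (h.comp hφ.injective).spaceable_of_tendsto hε hxφ
  · exact h.spaceable_of_forall_not_tendsto_comp hε fun p φ hφ hxφ => hx ⟨p, φ, hφ, hxφ⟩
end

section
/- Let K be an infinite compact Hausdorff space, let L = K × Bool (Bool discrete), and let J : C(L) → C(L) be the swap operator (Jf)(x,b) = f(x,¬b). Then J is not a weak multiplier on C(L). -/
open Filter Topology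

/-- The swap operator `J` on `C(K × Bool, ℝ)`, `(J f)(x, b) = f (x, ¬b)`. -/
noncomputable def swapOp (K : Type*) [TopologicalSpace K] [CompactSpace K] :
    C(K × Bool, ℝ) →L[ℝ] C(K × Bool, ℝ) :=
  LinearMap.mkContinuous
    { toFun := fun f => f.comp
        ⟨fun p => (p.1, !p.2),
          continuous_fst.prodMk ((continuous_of_discreteTopology (f := fun b : Bool => !b)).comp continuous_snd)⟩
      map_add' := fun f g => rfl
      map_smul' := fun c f => rfl }
    1
    (fun f => by
      rw [one_mul]
      exact (ContinuousMap.norm_le _ (norm_nonneg f)).mpr fun p => f.norm_coe_le_norm _)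

@[simp] theorem swapOp_apply {K : Type*} [TopologicalSpace K] [CompactSpace K]
    (f : C(K × Bool, ℝ)) (p : K × Bool) : swapOp K f p = f (p.1, !p.2) := rfl

/-- The restriction operator `π_i : C(K × Bool, ℝ) → C(K, ℝ)`, `π_i(f)(x) = f (x, i)`. -/
noncomputable def piOp (K : Type*) [TopologicalSpace K] [CompactSpace K] (i : Bool) :
    C(K × Bool, ℝ) →L[ℝ] C(K, ℝ) :=
  LinearMap.mkContinuous
    { toFun := fun f => f.comp ⟨fun x => (x, i), continuous_id.prodMk continuous_const⟩
      map_add' := fun f g => rfl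
      map_smul' := fun c f => rfl }
    1
    (fun f => by
      rw [one_mul]
      exact (ContinuousMap.norm_le _ (norm_nonneg f)).mpr fun x => f.norm_coe_le_norm _)

@[simp] theorem piOp_apply {K : Type*} [TopologicalSpace K] [CompactSpace K] (i : Bool)
    (f : C(K × Bool, ℝ)) (x : K) : piOp K i f x = f (x, i) := rfl

/-- The extension operator `σ_i : C(K, ℝ) → C(K × Bool, ℝ)`, `σ_i(g)(x, b) = g x` if `b = i`
and `0` otherwise. -/
noncomputable def sigmaOp (K : Type*) [TopologicalSpace K] [CompactSpace K] (i : Bool) :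
    C(K, ℝ) →L[ℝ] C(K × Bool, ℝ) :=
  LinearMap.mkContinuous
    { toFun := fun g =>
        ⟨fun p => if p.2 = i then g p.1 else 0, by
          have : (fun p : K × Bool => if p.2 = i then g p.1 else 0)
              = fun p : K × Bool => (if p.2 = i then (1 : ℝ) else 0) * g p.1 := by
            funext p
            by_cases h : p.2 = i <;> simp [h]
          rw [this]
          exact (((continuous_of_discreteTopology
              (f := fun b : Bool => if b = i then (1 : ℝ) else 0)).comp
            continuous_snd).mul (g.continuous.comp continuous_fst))⟩
      map_add' := fun f g => by
        ext p
        by_cases h : p.2 = i <;> simp [h]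
      map_smul' := fun c f => by
        ext p
        by_cases h : p.2 = i <;> simp [h] }
    1
    (fun g => by
      rw [one_mul]
      refine (ContinuousMap.norm_le _ (norm_nonneg g)).mpr fun p => ?_
      simp only [ContinuousMap.coe_mk, LinearMap.coe_mk, AddHom.coe_mk]
      by_cases h : p.2 = i
      · simpa [h] using g.norm_coe_le_norm p.1
      · simp [h])

@[simp] theorem sigmaOp_apply {K : Type*} [TopologicalSpace K] [CompactSpace K] (i : Bool)
    (g : C(K, ℝ)) (p : K × Bool) : sigmaOp K i g p = if p.2 = i then g p.1 else 0 := rfl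

/-!
Choose pairwise disjoint bump functions `gₙ` on `K` peaking at points `zₙ`, and put them on the
`true` copy of `K`. These form a bounded disjoint sequence vanishing at the points `(zₙ, false)`
of the other copy, while the swap moves each bump there: `J(σ gₙ)(zₙ, false) = gₙ(zₙ) = 1`.
-/

theorem CompletelyRegularSpace.exists_bump {X : Type*} [TopologicalSpace X]
    [CompletelyRegularSpace X] {U : Set X} (hU : IsOpen U) {x : X} (hx : x ∈ U) :
    ∃ g : C(X, ℝ), g x = 1 ∧ (∀ y ∉ U, g y = 0) ∧ ∀ y, |g y| ≤ 1 := by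
  obtain ⟨f, hf, hfx, hfU⟩ := CompletelyRegularSpace.completely_regular_isOpen x U hU hx
  refine ⟨⟨fun y => 1 - (f y : ℝ), by fun_prop⟩, by simp [hfx], fun y hy => by simp [hfU hy],
    fun y => abs_le.mpr ⟨?_, ?_⟩⟩ <;>
  simp only [ContinuousMap.coe_mk] <;>
  linarith [unitInterval.nonneg (f y), unitInterval.le_one (f y)]

theorem exists_seq_pairwise_disjoint_bump (X : Type*) [TopologicalSpace X] [T35Space X]
    [Infinite X] :
    ∃ (g : ℕ → C(X, ℝ)) (z : ℕ → X),
      (∀ n y, |g n y| ≤ 1) ∧ (∀ i j, i ≠ j → g i * g j = 0) ∧ ∀ n, g n (z n) = 1 := by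
  obtain ⟨U, hU_inf, hU_open, hU_disj⟩ := exists_seq_infinite_isOpen_pairwise_disjoint X
  choose z hz using fun n => (hU_inf n).nonempty
  choose g hg_peak hg_supp hg_bdd using
    fun n => CompletelyRegularSpace.exists_bump (hU_open n) (hz n)
  refine ⟨g, z, hg_bdd, fun i j hij => ?_, hg_peak⟩
  ext y
  by_cases hy : y ∈ U i
  · simp [hg_supp j y (Set.disjoint_left.mp (hU_disj hij) hy)]
  · simp [hg_supp i y hy]

section sigmaOp

variable {K : Type*} [TopologicalSpace K] [CompactSpace K]

theorem norm_sigmaOp_le (i : Bool) (g : C(K, ℝ)) : ‖sigmaOp K i g‖ ≤ ‖g‖ := by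
  simpa using (sigmaOp K i).le_of_opNorm_le (LinearMap.mkContinuous_norm_le _ zero_le_one _) g

theorem sigmaOp_mul (i : Bool) (f g : C(K, ℝ)) :
    sigmaOp K i f * sigmaOp K i g = sigmaOp K i (f * g) := by
  ext p
  by_cases h : p.2 = i <;> simp [h]

end sigmaOp

/-- For `K` an infinite compact Hausdorff space, the swap operator on `C(K × Bool, ℝ)` is not
a weak multiplier. -/
theorem swapOp_not_weakMultiplier
    {K : Type*} [TopologicalSpace K] [CompactSpace K] [T2Space K] [Infinite K] :
    ¬ IsWeakMultiplier (swapOp K) := by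
  intro hJ
  obtain ⟨g, z, hg_bdd, hg_disj, hg_peak⟩ := exists_seq_pairwise_disjoint_bump K
  have h_norm (n : ℕ) : ‖sigmaOp K true (g n)‖ ≤ 1 :=
    (norm_sigmaOp_le _ _).trans <| (ContinuousMap.norm_le _ zero_le_one).mpr (hg_bdd n)
  have h_tendsto := hJ (fun n => sigmaOp K true (g n)) (fun n => (z n, false)) ⟨1, h_norm⟩
    (fun i j hij => by simp only [sigmaOp_mul, hg_disj i j hij, map_zero]) (fun n => by simp)
  simp only [swapOp_apply, sigmaOp_apply, Bool.not_false, if_true, hg_peak] at h_tendsto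
  exact one_ne_zero (tendsto_nhds_unique tendsto_const_nhds h_tendsto)
end

section
/- Let K be a compact Hausdorff space such that every bounded linear operator on C(K) is a weak multiplication, let L = K × Bool (Bool discrete), and let J : C(L) → C(L) be the swap operator (Jf)(x,b) = f(x,¬b). Let T be a bounded linear operator on C(L) and let i, j ∈ Bool with i ≠ j. Then there exist g ∈ C(L) and a weakly compact operator S on C(L) such that σ_j ∘ π_j ∘ T ∘ σ_i ∘ π_i = g·J + S, where g·J denotes the operator f ↦ g·(Jf). -/
open Filter Topology

/-! The compression `π_j ∘ T ∘ σ_i` is an operator on `C(K)`, hence of the form `h·I + S₀`.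
Plugging this back, `σ_j ∘ (h·I) ∘ π_i` is `σ_j(h)·J` because `i ≠ j`, and `σ_j ∘ S₀ ∘ π_i` is
weakly compact, since weak compactness survives composition with bounded operators on either
side. -/

theorem IsCompact.closure_toWeakSpace_image_map {E F : Type*} [NormedAddCommGroup E]
    [NormedSpace ℝ E] [NormedAddCommGroup F] [NormedSpace ℝ F] (A : E →L[ℝ] F) {s : Set E}
    (hs : IsCompact (closure (toWeakSpace ℝ E '' s))) :
    IsCompact (closure (toWeakSpace ℝ F '' (A '' s))) :=
  (hs.image (WeakSpace.map A).continuous).closure_of_subset <| by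
    rintro - ⟨-, ⟨x, hx, rfl⟩, rfl⟩
    exact ⟨_, subset_closure ⟨x, hx, rfl⟩, rfl⟩

theorem IsWeaklyCompactOp.comp_comp {K L : Type*} [TopologicalSpace K] [CompactSpace K]
    [TopologicalSpace L] [CompactSpace L] {S : C(K, ℝ) →L[ℝ] C(K, ℝ)}
    (hS : IsWeaklyCompactOp S) (A : C(K, ℝ) →L[ℝ] C(L, ℝ)) (B : C(L, ℝ) →L[ℝ] C(K, ℝ)) :
    IsWeaklyCompactOp (A.comp (S.comp B)) := by
  -- Rescale so that the right factor maps the unit ball into the unit ball.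
  set c : ℝ := ‖B‖ + 1
  have hc : 0 < c := by positivity
  have hsub : (A.comp (S.comp B)) '' Metric.closedBall 0 1
      ⊆ (c • A) '' (S '' Metric.closedBall 0 1) := by
    rintro - ⟨f, hf, rfl⟩
    refine ⟨S (c⁻¹ • B f), ⟨c⁻¹ • B f, ?_, rfl⟩, ?_⟩
    · rw [mem_closedBall_zero_iff] at hf ⊢
      rw [norm_smul, Real.norm_of_nonneg (inv_nonneg.mpr hc.le), inv_mul_le_iff₀ hc, mul_one]
      linarith [B.le_opNorm_of_le hf]
    · simp [hc.ne']
  exact (hS.closure_toWeakSpace_image_map (c • A)).closure_of_subset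
    ((Set.image_mono hsub).trans subset_closure)

theorem sigmaOp_comp_mul_comp_piOp {K : Type*} [TopologicalSpace K] [CompactSpace K]
    {i j : Bool} (hij : i ≠ j) (h : C(K, ℝ)) :
    (sigmaOp K j).comp ((ContinuousLinearMap.mul ℝ C(K, ℝ) h).comp (piOp K i))
      = (ContinuousLinearMap.mul ℝ C(K × Bool, ℝ) (sigmaOp K j h)).comp (swapOp K) := by
  have hji : (!j) = i := by cases i <;> cases j <;> simp_all
  ext f ⟨x, b⟩
  by_cases hb : b = j <;> simp [hb, hji]

theorem offdiagonal_component_decomposition_general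
    {K : Type*} [TopologicalSpace K] [CompactSpace K]
    (hfew : ∀ S : C(K, ℝ) →L[ℝ] C(K, ℝ), IsWeakMultiplication S)
    (T : C(K × Bool, ℝ) →L[ℝ] C(K × Bool, ℝ)) (i j : Bool) (hij : i ≠ j) :
    ∃ (g : C(K × Bool, ℝ)) (S : C(K × Bool, ℝ) →L[ℝ] C(K × Bool, ℝ)),
      IsWeaklyCompactOp S ∧
      (sigmaOp K j).comp ((piOp K j).comp (T.comp ((sigmaOp K i).comp (piOp K i))))
        = (ContinuousLinearMap.mul ℝ C(K × Bool, ℝ) g).comp (swapOp K) + S := by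
  obtain ⟨h, S₀, hS₀, hT⟩ := hfew ((piOp K j).comp (T.comp (sigmaOp K i)))
  refine ⟨sigmaOp K j h, (sigmaOp K j).comp (S₀.comp (piOp K i)), hS₀.comp_comp _ _, ?_⟩
  calc (sigmaOp K j).comp ((piOp K j).comp (T.comp ((sigmaOp K i).comp (piOp K i))))
      = (sigmaOp K j).comp (((piOp K j).comp (T.comp (sigmaOp K i))).comp (piOp K i)) := rfl
    _ = _ := by
      rw [hT, ContinuousLinearMap.add_comp, ContinuousLinearMap.comp_add,
        sigmaOp_comp_mul_comp_piOp hij]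

/-- If every operator on `C(K, ℝ)` is a weak multiplication, then for every operator `T` on
`C(K × Bool, ℝ)` and all `i ≠ j` in `Bool`, the operator `σ_j ∘ π_j ∘ T ∘ σ_i ∘ π_i` has the
form `g·J + S` with `g ∈ C(K × Bool, ℝ)`, `J` the swap operator and `S` weakly compact. -/
theorem offdiagonal_component_decomposition
    {K : Type*} [TopologicalSpace K] [CompactSpace K] [T2Space K]
    (hfew : ∀ S : C(K, ℝ) →L[ℝ] C(K, ℝ), IsWeakMultiplication S)
    (T : C(K × Bool, ℝ) →L[ℝ] C(K × Bool, ℝ)) (i j : Bool) (hij : i ≠ j) :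
    ∃ (g : C(K × Bool, ℝ)) (S : C(K × Bool, ℝ) →L[ℝ] C(K × Bool, ℝ)),
      IsWeaklyCompactOp S ∧
      (sigmaOp K j).comp ((piOp K j).comp (T.comp ((sigmaOp K i).comp (piOp K i))))
        = (ContinuousLinearMap.mul ℝ C(K × Bool, ℝ) g).comp (swapOp K) + S :=
  offdiagonal_component_decomposition_general hfew T i j hij
end

section
/- Let K be a compact Hausdorff space with no non-trivial convergent sequence (i.e., no sequence of pairwise distinct points of K converges in K). If there exists a bounded linear operator T on C(K) which is not a weak multiplier, then the set of bounded linear operators on C(K) which are not weak multipliers is lineable in L(C(K)). -/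
open Filter Topology

/-!
If `T` is not a weak multiplier, then after passing to a subsequence there are bounded pairwise
disjoint `eₙ` and points `xₙ` with `eₙ(xₙ) = 0` and `|T eₙ (xₙ)| ≥ δ > 0`. Signed finite sums of
the `eₙ` stay bounded, so no bounded functional (e.g. `f ↦ T f (p)`) is `≥ δ` in absolute value on
all of them; hence no point occurs infinitely often among the `xₙ`. Since `K` has no nontrivial
convergent sequences, `(xₙ)` must then have infinitely many cluster points. If `v ∈ C(K)` does not
vanish at some cluster point, then `v · T` is not a weak multiplier. Urysohn functions `v_k` with
`v_k(c_k) = 1` and `v_k(c_j) = 0` for `j < k`, at distinct cluster points `c_k`, are such that every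
nonzero linear combination is nonzero at some `c_k`; so the operators `v_k · T` span an
infinite-dimensional space of non weak multipliers.
-/
section DisjointSums

variable {K : Type*} [TopologicalSpace K] [CompactSpace K]

lemma norm_sum_smul_le_of_pairwise_mul_eq_zero {ι : Type*} [Nonempty ι] {e : ι → C(K, ℝ)} {M : ℝ}
    (hM : ∀ i, ‖e i‖ ≤ M) (hdisj : Pairwise fun i j => e i * e j = 0)
    {a : ι → ℝ} (ha : ∀ i, |a i| ≤ 1) (s : Finset ι) :
    ‖∑ i ∈ s, a i • e i‖ ≤ M := by
  have hM0 : 0 ≤ M := (norm_nonneg _).trans (hM (Classical.arbitrary ι))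
  refine (ContinuousMap.norm_le _ hM0).2 fun y => ?_
  rw [ContinuousMap.sum_apply]
  by_cases hy : ∃ i ∈ s, e i y ≠ 0
  · obtain ⟨i, hi, hyi⟩ := hy
    have hvanish : ∀ j, j ≠ i → e j y = 0 := fun j hji =>
      (mul_eq_zero.1 (congr($(hdisj hji) y))).resolve_right hyi
    rw [Finset.sum_eq_single_of_mem i hi fun j _ hji => by simp [hvanish j hji]]
    calc ‖(a i • e i) y‖ = |a i| * ‖e i y‖ := by simp
      _ ≤ 1 * ‖e i‖ := by gcongr; exacts [ha i, (e i).norm_coe_le_norm y]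
      _ ≤ M := by simpa using hM i
  · push Not at hy
    rw [Finset.sum_eq_zero fun i hi => by simp [hy i hi]]
    simpa using hM0

lemma not_forall_le_abs_apply_of_pairwise_mul_eq_zero (φ : C(K, ℝ) →L[ℝ] ℝ)
    {e : ℕ → C(K, ℝ)} {M δ : ℝ} (hδ : 0 < δ) (hM : ∀ n, ‖e n‖ ≤ M)
    (hdisj : Pairwise fun i j => e i * e j = 0) : ¬ ∀ n, δ ≤ |φ (e n)| := by
  intro hφ
  obtain ⟨N, hN⟩ := exists_nat_gt (‖φ‖ * M / δ)
  -- Disjointness keeps `∑ ± e n` in the `M`-ball, while `φ` adds up the `|φ (e n)| ≥ δ`.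
  set f := ∑ n ∈ Finset.range N, (SignType.sign (φ (e n)) : ℝ) • e n
  have hf : ‖f‖ ≤ M := norm_sum_smul_le_of_pairwise_mul_eq_zero hM hdisj
    (fun n => by rcases lt_trichotomy (φ (e n)) 0 with h | h | h <;> simp [h]) _
  have hφf : φ f = ∑ n ∈ Finset.range N, |φ (e n)| := by
    simp [f, map_sum]
  have : N * δ ≤ ‖φ‖ * M := calc
    N * δ ≤ φ f := by
      rw [hφf]
      simpa using Finset.card_nsmul_le_sum (Finset.range N) _ δ fun n _ => hφ n
    _ ≤ ‖φ f‖ := le_abs_self _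
    _ ≤ ‖φ‖ * ‖f‖ := φ.le_opNorm f
    _ ≤ ‖φ‖ * M := by gcongr
  rw [div_lt_iff₀ hδ] at hN
  linarith

end DisjointSums

section NoConvergentSequences

variable {X : Type*} [TopologicalSpace X]

lemma frequently_eq_of_tendsto_of_forall_injective [T1Space X]
    (hX : ∀ (x : ℕ → X) (p : X), Function.Injective x → ¬ Tendsto x atTop (𝓝 p))
    {x : ℕ → X} {p : X} (hx : Tendsto x atTop (𝓝 p)) : ∃ᶠ n in atTop, x n = p := by
  intro hne
  set A := x '' {n | x n ≠ p}
  by_cases hA : A.Finite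
  · obtain ⟨n, hn, hxn⟩ : p ∈ A :=
      hA.isClosed.mem_of_tendsto hx (hne.mono fun n hn => ⟨n, hn, rfl⟩)
    exact hn hxn
  · -- Distinct points of `A` have distinct indices, and an injective `ℕ → ℕ` tends to `atTop`.
    choose g _ hg using fun k => (Set.Infinite.natEmbedding A hA k).2
    have hinj : Function.Injective (x ∘ g) := fun i j hij =>
      (Set.Infinite.natEmbedding A hA).injective <| Subtype.ext <| by simpa [hg] using hij
    exact hX _ p hinj <| hx.comp <| Nat.cofinite_eq_atTop ▸ hinj.of_comp.tendsto_cofinite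

lemma exists_frequently_eq_of_finite_mapClusterPt [CompactSpace X] [T2Space X]
    (hX : ∀ (x : ℕ → X) (p : X), Function.Injective x → ¬ Tendsto x atTop (𝓝 p))
    {x : ℕ → X} (hC : {p | MapClusterPt p atTop x}.Finite) :
    ∃ p, ∃ᶠ n in atTop, x n = p := by
  set C := {p | MapClusterPt p atTop x}
  obtain ⟨U, hU, hUdisj⟩ := hC.t2_separation
  have hev : ∀ᶠ n in atTop, x n ∈ ⋃ q ∈ C, U q :=
    (isCompact_univ.tendsto_nhdsSet_of_mapClusterPt (.of_forall fun _ => trivial)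
      fun q _ hq => hq).eventually_mem <|
      (isOpen_biUnion fun q _ => (hU q).2).mem_nhdsSet.2 fun q hq => Set.mem_biUnion hq (hU q).1
  obtain ⟨q, hqC, hq⟩ : ∃ q ∈ C, ∃ᶠ n in atTop, x n ∈ U q := by
    by_contra! h
    obtain ⟨n, hn, hn'⟩ := (hev.and (hC.eventually_all.2 h)).exists
    obtain ⟨q, hqC, hxq⟩ := Set.mem_iUnion₂.1 hn
    exact hn' q hqC hxq
  obtain ⟨φ, hφ, hφU⟩ := extraction_of_frequently_atTop hq
  -- The `U r` are pairwise disjoint open sets, so `q` is the only point of `C` in `closure (U q)`.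
  have hlim : Tendsto (x ∘ φ) atTop (𝓝 q) := by
    refine tendsto_nhds_of_unique_mapClusterPt fun r hr => ?_
    have hrC : r ∈ C := hr.of_comp hφ.tendsto_atTop
    by_contra hrq
    have hrcl : r ∈ closure (U q) :=
      isClosed_closure.mem_of_mapClusterPt hr (.of_forall fun n => subset_closure (hφU n))
    exact (mem_closure_iff.1 hrcl (U r) (hU r).2 (hU r).1).elim fun y hy =>
      (hUdisj hrC hqC hrq).le_bot hy
  exact ⟨q, hφ.tendsto_atTop.frequently (frequently_eq_of_tendsto_of_forall_injective hX hlim)⟩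

end NoConvergentSequences

section Bumps

variable {X : Type*} [TopologicalSpace X] [T1Space X] [NormalSpace X]

lemma exists_continuousMap_apply_eq_one_apply_eq_zero_of_lt {c : ℕ → X}
    (hc : Function.Injective c) :
    ∃ v : ℕ → C(X, ℝ), ∀ k, v k (c k) = 1 ∧ ∀ j < k, v k (c j) = 0 := by
  choose v hv0 hv1 _ using fun k => exists_continuous_zero_one_of_isClosed
    ((Set.finite_Iio k).image c).isClosed (isClosed_singleton (x := c k))
    (Set.disjoint_singleton_right.2 fun ⟨j, hj, hjk⟩ => (hc hjk).not_lt hj)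
  exact ⟨v, fun k => ⟨hv1 k rfl, fun j hj => hv0 k ⟨j, hj, rfl⟩⟩⟩

lemma Set.Infinite.exists_linearCombination_apply_ne_zero {C : Set X} (hC : C.Infinite) :
    ∃ v : ℕ → C(X, ℝ), ∀ a : ℕ →₀ ℝ, a ≠ 0 →
      ∃ p ∈ C, Finsupp.linearCombination ℝ v a p ≠ 0 := by
  let c : ℕ → X := fun k => Set.Infinite.natEmbedding C hC k
  obtain ⟨v, hv⟩ := exists_continuousMap_apply_eq_one_apply_eq_zero_of_lt (c := c)
    (Subtype.val_injective.comp (Set.Infinite.natEmbedding C hC).injective)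
  refine ⟨v, fun a ha => ?_⟩
  have hex : ∃ m, a m ≠ 0 := by simpa [Finsupp.ext_iff] using ha
  classical
  -- Evaluating at `c m` for the smallest `m` with `a m ≠ 0` kills every other term.
  refine ⟨c (Nat.find hex), (Set.Infinite.natEmbedding C hC _).2, ?_⟩
  rw [Finsupp.linearCombination_apply, Finsupp.sum, ContinuousMap.sum_apply,
    Finset.sum_eq_single (Nat.find hex)]
  · simpa [(hv _).1] using Nat.find_spec hex
  · intro k hk hkm
    have hmk : Nat.find hex < k :=
      (Nat.find_min' hex (Finsupp.mem_support_iff.1 hk)).lt_of_ne (Ne.symm hkm)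
    simp [(hv k).2 _ hmk]
  · intro hm
    exact absurd (Finsupp.notMem_support_iff.1 hm) (Nat.find_spec hex)

end Bumps

lemma lineable_of_linearCombination_mem {V : Type*} [AddCommGroup V] [Module ℝ V] {A : Set V}
    (hA : 0 ∉ A) {ι : Type*} [Infinite ι] (f : ι → V)
    (hf : ∀ a : ι →₀ ℝ, a ≠ 0 → Finsupp.linearCombination ℝ f a ∈ A) : Lineable A := by
  have hli : LinearIndependent ℝ f := linearIndependent_iff.2 fun a ha => by
    by_contra h0
    exact hA (ha ▸ hf a h0)
  refine ⟨Submodule.span ℝ (Set.range f), fun _ =>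
    Module.Finite.not_linearIndependent_of_infinite _ (linearIndependent_span hli), ?_⟩
  intro y hy
  rw [SetLike.mem_coe, ← Finsupp.range_linearCombination] at hy
  obtain ⟨a, rfl⟩ := hy
  by_cases ha : a = 0
  · simp [ha]
  · exact Or.inl (hf a ha)

section WeakMultipliers

variable {K : Type*} [TopologicalSpace K] [CompactSpace K]

lemma isWeakMultiplier_zero : IsWeakMultiplier (0 : C(K, ℝ) →L[ℝ] C(K, ℝ)) :=
  fun _ _ _ _ _ => by simp

/-- The failure of the weak multiplier property, made uniform by passing to a subsequence. -/
structure NonWeakMultiplierWitness (T : C(K, ℝ) →L[ℝ] C(K, ℝ)) (e : ℕ → C(K, ℝ)) (x : ℕ → K)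
    (δ : ℝ) : Prop where
  pos : 0 < δ
  bounded : ∃ M, ∀ n, ‖e n‖ ≤ M
  pairwise_mul_eq_zero : Pairwise fun i j => e i * e j = 0
  apply_eq_zero : ∀ n, e n (x n) = 0
  le_abs : ∀ n, δ ≤ |T (e n) (x n)|

lemma exists_le_abs_of_not_tendsto_zero {u : ℕ → ℝ} (hu : ¬ Tendsto u atTop (𝓝 0)) :
    ∃ δ > 0, ∃ φ : ℕ → ℕ, StrictMono φ ∧ ∀ n, δ ≤ |u (φ n)| := by
  rw [Metric.tendsto_atTop] at hu
  push Not at hu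
  obtain ⟨δ, hδ, hfreq⟩ := hu
  obtain ⟨φ, hφ, hδφ⟩ := extraction_of_frequently_atTop (frequently_atTop.2 hfreq)
  exact ⟨δ, hδ, φ, hφ, fun n => by simpa using hδφ n⟩

lemma exists_nonWeakMultiplierWitness {T : C(K, ℝ) →L[ℝ] C(K, ℝ)} (hT : ¬ IsWeakMultiplier T) :
    ∃ e x δ, NonWeakMultiplierWitness T e x δ := by
  simp only [IsWeakMultiplier, not_forall] at hT
  obtain ⟨e, x, ⟨M, hM⟩, hdisj, hzero, hT⟩ := hT
  obtain ⟨δ, hδ, φ, hφ, hδφ⟩ := exists_le_abs_of_not_tendsto_zero hT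
  exact ⟨e ∘ φ, x ∘ φ, δ, hδ, ⟨M, fun n => hM _⟩,
    fun i j hij => hdisj _ _ (hφ.injective.ne hij), fun n => hzero _, hδφ⟩

namespace NonWeakMultiplierWitness

variable {T : C(K, ℝ) →L[ℝ] C(K, ℝ)} {e : ℕ → C(K, ℝ)} {x : ℕ → K} {δ : ℝ}

lemma not_frequently_eq (hw : NonWeakMultiplierWitness T e x δ) (p : K) :
    ¬ ∃ᶠ n in atTop, x n = p := by
  intro hp
  obtain ⟨φ, hφ, hxφ⟩ := extraction_of_frequently_atTop hp
  obtain ⟨M, hM⟩ := hw.bounded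
  refine not_forall_le_abs_apply_of_pairwise_mul_eq_zero ((ContinuousMap.evalCLM ℝ p).comp T)
    hw.pos (fun n => hM (φ n)) (fun i j hij => hw.pairwise_mul_eq_zero (hφ.injective.ne hij))
    fun n => ?_
  simpa [hxφ n] using hw.le_abs (φ n)

lemma infinite_mapClusterPt [T2Space K] (hw : NonWeakMultiplierWitness T e x δ)
    (hK : ∀ (x : ℕ → K) (p : K), Function.Injective x → ¬ Tendsto x atTop (𝓝 p)) :
    {p | MapClusterPt p atTop x}.Infinite := fun hfin =>
  let ⟨p, hp⟩ := exists_frequently_eq_of_finite_mapClusterPt hK hfin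
  hw.not_frequently_eq p hp

lemma not_isWeakMultiplier_mul_comp (hw : NonWeakMultiplierWitness T e x δ) {p : K}
    (hp : MapClusterPt p atTop x) {v : C(K, ℝ)} (hvp : v p ≠ 0) :
    ¬ IsWeakMultiplier ((ContinuousLinearMap.mul ℝ C(K, ℝ) v).comp T) := by
  intro hvT
  obtain ⟨M, hM⟩ := hw.bounded
  have hlim := hvT e x ⟨M, hM⟩ hw.pairwise_mul_eq_zero hw.apply_eq_zero
  have hε : 0 < |v p| / 2 * δ := by have := abs_pos.2 hvp; have := hw.pos; positivity
  have hnear : ∀ᶠ y in 𝓝 p, |v p| / 2 < |v y| :=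
    (continuous_abs.comp v.continuous).continuousAt.eventually_const_lt
      (half_lt_self (abs_pos.2 hvp))
  obtain ⟨n, hvn, hsmall⟩ := ((hp.frequently hnear).and_eventually
    ((Metric.tendsto_nhds.1 hlim) _ hε)).exists
  have hlarge : |v p| / 2 * δ ≤ |v (x n)| * |T (e n) (x n)| :=
    mul_le_mul hvn.le (hw.le_abs n) hw.pos.le (abs_nonneg _)
  have hsmall : |v (x n)| * |T (e n) (x n)| < |v p| / 2 * δ := by simpa using hsmall
  exact hsmall.not_ge hlarge

end NonWeakMultiplierWitness

end WeakMultipliers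

/-- If `K` has no non-trivial convergent sequence and there exists an operator on `C(K, ℝ)`
which is not a weak multiplier, then the set of non weak multipliers is lineable. -/
theorem lineable_nonWeakMultipliers_of_no_convergent_sequence
    {K : Type*} [TopologicalSpace K] [CompactSpace K] [T2Space K]
    (hK : ∀ (x : ℕ → K) (p : K), Function.Injective x →
      ¬ Filter.Tendsto x Filter.atTop (nhds p))
    (h : ∃ T : C(K, ℝ) →L[ℝ] C(K, ℝ), ¬ IsWeakMultiplier T) :
    Lineable {T : C(K, ℝ) →L[ℝ] C(K, ℝ) | ¬ IsWeakMultiplier T} := by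
  obtain ⟨T, hT⟩ := h
  obtain ⟨e, x, δ, hw⟩ := exists_nonWeakMultiplierWitness hT
  obtain ⟨v, hv⟩ := (hw.infinite_mapClusterPt hK).exists_linearCombination_apply_ne_zero
  let mulComp : C(K, ℝ) →ₗ[ℝ] C(K, ℝ) →L[ℝ] C(K, ℝ) :=
    (((ContinuousLinearMap.compL ℝ C(K, ℝ) C(K, ℝ) C(K, ℝ)).flip T).comp
      (ContinuousLinearMap.mul ℝ C(K, ℝ))).toLinearMap
  refine lineable_of_linearCombination_mem (fun h0 => h0 isWeakMultiplier_zero) (mulComp ∘ v)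
    fun a ha => ?_
  obtain ⟨p, hp, hvp⟩ := hv a ha
  rw [← Finsupp.apply_linearCombination]
  exact hw.not_isWeakMultiplier_mul_comp hp hvp
end
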